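/- (Schmidt–Eckart–Young–Mirsky, Frobenius norm) Let X ∈ ℝ^{m×n} have singular value decomposition X = U Σ Vᵀ with singular values σ₁ ≥ σ₂ ≥ ⋯ ≥ σ_{min(m,n)} ≥ 0, left singular vectors u_i (columns of U) and right singular vectors v_i (columns of V). For every r with 0 ≤ r ≤ min(m,n), the truncated matrix X_r = Σ_{i=1}^{r} σ_i u_i v_iᵀ is a best rank-at-most-r approximation of X in the Frobenius norm: for every matrix B ∈ ℝ^{m×n} with rank(B) ≤ r one has ‖X − B‖_F ≥ ‖X − X_r‖_F, and moreover ‖X − X_r‖_F² = Σ_{i=r+1}^{min(m,n)} σ_i². -/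

import Mathlib

open scoped Matrix

/-- The `m × n` rectangular diagonal matrix whose diagonal entries are the given
singular values `σ : Fin (min m n) → ℝ`. -/
noncomputable def svdDiag {m n : ℕ} (σ : Fin (min m n) → ℝ) : Matrix (Fin m) (Fin n) ℝ :=
  fun i j =>
    if h : (i : ℕ) = (j : ℕ) then
      σ ⟨(i : ℕ), by have hi := i.isLt; have hj := j.isLt; omega⟩
    else 0

/-- The rank-`r` truncated SVD `X_r = Σ_{i<r} σ_i u_i v_iᵀ`, where `u_i`, `v_i` are the
columns of `U` and `V` respectively. -/
noncomputable def truncSVD {m n : ℕ} (U : Matrix (Fin m) (Fin m) ℝ)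
    (V : Matrix (Fin n) (Fin n) ℝ) (σ : Fin (min m n) → ℝ) (r : ℕ) :
    Matrix (Fin m) (Fin n) ℝ :=
  fun k l => ∑ i : Fin (min m n),
    if (i : ℕ) < r then
      σ i * U k ⟨(i : ℕ), by have := i.isLt; omega⟩ *
        V l ⟨(i : ℕ), by have := i.isLt; omega⟩
    else 0

/-- The Frobenius norm of a real matrix. -/
noncomputable def frobNorm {m n : ℕ} (A : Matrix (Fin m) (Fin n) ℝ) : ℝ :=
  Real.sqrt (∑ i, ∑ j, (A i j) ^ 2)

set_option maxHeartbeats 1000000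

lemma trace_eq_frobSq {m n : ℕ} (A : Matrix (Fin m) (Fin n) ℝ) :
    Matrix.trace (Aᵀ * A) = ∑ i, ∑ j, (A i j) ^ 2 := by
  rw [Finset.sum_comm]
  simp [Matrix.trace, Matrix.diag, Matrix.mul_apply, sq]

lemma frobSq_conj {m n : ℕ} (U : Matrix (Fin m) (Fin m) ℝ) (V : Matrix (Fin n) (Fin n) ℝ)
    (hU : Uᵀ * U = 1) (hV : Vᵀ * V = 1) (A : Matrix (Fin m) (Fin n) ℝ) :
    ∑ i, ∑ j, ((U * A * Vᵀ) i j) ^ 2 = ∑ i, ∑ j, (A i j) ^ 2 := by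
  rw [← trace_eq_frobSq, ← trace_eq_frobSq]
  have : (U * A * Vᵀ)ᵀ * (U * A * Vᵀ) = V * (Aᵀ * A) * Vᵀ := by
    simp only [Matrix.transpose_mul, Matrix.transpose_transpose]
    calc V * (Aᵀ * Uᵀ) * (U * A * Vᵀ) = V * (Aᵀ * ((Uᵀ * U) * A)) * Vᵀ := by
          simp only [Matrix.mul_assoc]
      _ = V * (Aᵀ * A) * Vᵀ := by rw [hU, Matrix.one_mul]
  rw [this, Matrix.trace_mul_comm, ← Matrix.mul_assoc, hV, Matrix.one_mul]

def iM {m n : ℕ} (i : Fin (min m n)) : Fin m := ⟨(i : ℕ), by have := i.isLt; omega⟩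
def iN {m n : ℕ} (i : Fin (min m n)) : Fin n := ⟨(i : ℕ), by have := i.isLt; omega⟩

lemma svdDiag_apply_ne {m n : ℕ} (σ : Fin (min m n) → ℝ) {a : Fin m} {b : Fin n}
    (h : (a : ℕ) ≠ (b : ℕ)) : svdDiag σ a b = 0 := dif_neg h

lemma svdDiag_apply_iMN {m n : ℕ} (σ : Fin (min m n) → ℝ) (i : Fin (min m n)) :
    svdDiag σ (iM i) (iN i) = σ i := by
  have h : ((iM i : Fin m) : ℕ) = ((iN i : Fin n) : ℕ) := rfl
  rw [svdDiag, dif_pos h]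
  congr 1

lemma mul_svdDiag_apply {m n : ℕ} (U : Matrix (Fin m) (Fin m) ℝ)
    (τ : Fin (min m n) → ℝ) (k : Fin m) (b : Fin n) :
    (U * svdDiag τ) k b =
      if h : (b : ℕ) < min m n then τ ⟨b, h⟩ * U k ⟨b, by omega⟩ else 0 := by
  rw [Matrix.mul_apply]
  by_cases h : (b : ℕ) < min m n
  · rw [dif_pos h]
    rw [Finset.sum_eq_single (⟨(b : ℕ), by omega⟩ : Fin m)]
    · have hd : svdDiag τ (⟨(b : ℕ), by omega⟩ : Fin m) b = τ ⟨b, h⟩ := by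
        rw [svdDiag, dif_pos rfl]
      rw [hd, mul_comm]
    · intro a _ ha
      have hne : (a : ℕ) ≠ (b : ℕ) := fun hab => ha (by ext; simpa using hab)
      rw [svdDiag_apply_ne τ hne, mul_zero]
    · simp
  · rw [dif_neg h]
    apply Finset.sum_eq_zero
    intro a _
    have hne : (a : ℕ) ≠ (b : ℕ) := by have := a.isLt; have := b.isLt; omega
    rw [svdDiag_apply_ne τ hne, mul_zero]

lemma sum_dite_min_right {n N : ℕ} (hNn : N ≤ n) (f : Fin n → ℝ)
    (hf : ∀ b : Fin n, N ≤ (b : ℕ) → f b = 0) :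
    ∑ b : Fin n, f b = ∑ i : Fin N, f (Fin.castLE hNn i) := by
  have h1 : ∑ i : Fin N, f (Fin.castLE hNn i) =
      ∑ b ∈ Finset.univ.map (Fin.castLEEmb hNn), f b := by
    rw [Finset.sum_map]; rfl
  rw [h1]
  symm
  apply Finset.sum_subset (Finset.subset_univ _)
  intro b _ hb
  apply hf
  by_contra hlt
  push_neg at hlt
  exact hb (Finset.mem_map.mpr ⟨⟨(b : ℕ), hlt⟩, Finset.mem_univ _, by ext; rfl⟩)

lemma conj_diag_apply {m n : ℕ} (U : Matrix (Fin m) (Fin m) ℝ) (V : Matrix (Fin n) (Fin n) ℝ)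
    (τ : Fin (min m n) → ℝ) (k : Fin m) (l : Fin n) :
    (U * svdDiag τ * Vᵀ) k l = ∑ i : Fin (min m n), τ i * U k (iM i) * V l (iN i) := by
  rw [Matrix.mul_apply]
  simp only [Matrix.transpose_apply, mul_svdDiag_apply]
  rw [sum_dite_min_right (min_le_right m n)
    (f := fun b => (if h : (b : ℕ) < min m n then τ ⟨b, h⟩ * U k ⟨b, by omega⟩ else 0) * V l b)]
  · apply Finset.sum_congr rfl
    intro i _
    rw [dif_pos (by exact i.isLt)]
    rfl
  · intro b hb
    rw [dif_neg (by omega), zero_mul]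

lemma truncSVD_eq {m n : ℕ} (U : Matrix (Fin m) (Fin m) ℝ)
    (V : Matrix (Fin n) (Fin n) ℝ) (σ : Fin (min m n) → ℝ) (r : ℕ) :
    truncSVD U V σ r = U * svdDiag (fun i => if (i : ℕ) < r then σ i else 0) * Vᵀ := by
  funext k l
  rw [conj_diag_apply]
  apply Finset.sum_congr rfl
  intro i _
  by_cases h : (i : ℕ) < r
  · rw [if_pos h, if_pos h]; rfl
  · rw [if_neg h, if_neg h, zero_mul, zero_mul]

lemma svdDiag_sub {m n : ℕ} (σ τ : Fin (min m n) → ℝ) :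
    svdDiag σ - svdDiag τ = svdDiag (fun i => σ i - τ i) := by
  funext a b
  by_cases h : (a : ℕ) = (b : ℕ)
  · simp only [Matrix.sub_apply, svdDiag, dif_pos h]
  · simp only [Matrix.sub_apply, svdDiag, dif_neg h, sub_zero]

lemma svdDiag_frobSq {m n : ℕ} (τ : Fin (min m n) → ℝ) :
    ∑ a : Fin m, ∑ b : Fin n, (svdDiag τ a b) ^ 2 = ∑ i : Fin (min m n), τ i ^ 2 := by
  have hrow : ∀ a : Fin m, ∑ b : Fin n, (svdDiag τ a b) ^ 2 =
      if h : (a : ℕ) < min m n then τ ⟨a, h⟩ ^ 2 else 0 := by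
    intro a
    by_cases h : (a : ℕ) < min m n
    · rw [dif_pos h]
      rw [Finset.sum_eq_single (⟨(a : ℕ), by omega⟩ : Fin n)]
      · have hd : svdDiag τ a (⟨(a : ℕ), by omega⟩ : Fin n) = τ ⟨a, h⟩ := by
          rw [svdDiag, dif_pos rfl]
        rw [hd]
      · intro b _ hb
        have hne : (a : ℕ) ≠ (b : ℕ) := fun hab => hb (by ext; simpa using hab.symm)
        rw [svdDiag_apply_ne τ hne]; ring
      · simp
    · rw [dif_neg h]
      apply Finset.sum_eq_zero
      intro b _
      have hne : (a : ℕ) ≠ (b : ℕ) := by have := a.isLt; have := b.isLt; omega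
      rw [svdDiag_apply_ne τ hne]; ring
  simp only [hrow]
  rw [sum_dite_min_right (min_le_left m n)
    (f := fun a : Fin m => if h : (a : ℕ) < min m n then τ ⟨a, h⟩ ^ 2 else 0)]
  · apply Finset.sum_congr rfl
    intro i _
    rw [dif_pos (by exact i.isLt)]
    congr 1
  · intro b hb
    rw [dif_neg (by omega)]

lemma count_lt_r {N r : ℕ} (hr : r ≤ N) :
    ∑ i : Fin N, (if (i : ℕ) < r then (1 : ℝ) else 0) = r := by
  rw [Fin.sum_univ_eq_sum_range (fun i => if i < r then (1 : ℝ) else 0) N]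
  have : ∀ i ∈ Finset.range N, (if i < r then (1 : ℝ) else 0) =
      if i ∈ Finset.range r then 1 else 0 := by
    intro i _; simp [Finset.mem_range]
  rw [Finset.sum_congr rfl this, Finset.sum_ite_mem]
  have : Finset.range N ∩ Finset.range r = Finset.range r := by
    apply Finset.inter_eq_right.mpr
    intro x hx
    simp only [Finset.mem_range] at *
    omega
  rw [this]; simp

lemma rearrange {N r : ℕ} (s q : Fin N → ℝ) (hs0 : ∀ i, 0 ≤ s i)
    (hmono : ∀ i j : Fin N, i ≤ j → s j ≤ s i)
    (hq0 : ∀ i, 0 ≤ q i) (hq1 : ∀ i, q i ≤ 1) (hqsum : ∑ i, q i ≤ r) :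
    ∑ i, s i * q i ≤ ∑ i : Fin N, if (i : ℕ) < r then s i else 0 := by
  by_cases hrN : r < N
  · set i0 : Fin N := ⟨r, hrN⟩ with hi0
    set t := s i0 with ht
    have key : ∀ i : Fin N, s i * q i - (if (i : ℕ) < r then s i else 0) ≤
        t * (q i - (if (i : ℕ) < r then 1 else 0)) := by
      intro i
      by_cases h : (i : ℕ) < r
      · rw [if_pos h, if_pos h]
        have h1 : t ≤ s i := hmono i i0 (by rw [Fin.le_def]; simpa [hi0] using le_of_lt h)
        nlinarith [hq1 i]
      · rw [if_neg h, if_neg h]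
        have h1 : s i ≤ t := hmono i0 i (by rw [Fin.le_def]; simp only [hi0]; omega)
        nlinarith [hq0 i]
    have h2 : ∑ i, (s i * q i - (if (i : ℕ) < r then s i else 0)) ≤
        ∑ i, t * (q i - (if (i : ℕ) < r then 1 else 0)) :=
      Finset.sum_le_sum (fun i _ => key i)
    rw [Finset.sum_sub_distrib] at h2
    have h3 : ∑ i, t * (q i - (if (i : ℕ) < r then 1 else 0)) = t * (∑ i, q i - r) := by
      rw [← Finset.mul_sum, Finset.sum_sub_distrib, count_lt_r (le_of_lt hrN)]
    rw [h3] at h2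
    have ht0 : 0 ≤ t := hs0 i0
    nlinarith
  · push_neg at hrN
    have : ∀ i : Fin N, (if (i : ℕ) < r then s i else 0) = s i := by
      intro i; rw [if_pos (by omega)]
    rw [Finset.sum_congr rfl (fun i _ => this i)]
    apply Finset.sum_le_sum
    intro i _
    nlinarith [hq1 i, hs0 i, hq0 i]

open scoped RealInnerProductSpace

lemma eucl_norm_sq {m : ℕ} (x : EuclideanSpace ℝ (Fin m)) : ‖x‖ ^ 2 = ∑ i, (x i) ^ 2 := by
  rw [EuclideanSpace.norm_eq, Real.sq_sqrt (by positivity)]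
  simp [sq_abs]

lemma core {m n r : ℕ} (σ : Fin (min m n) → ℝ) (hσ0 : ∀ i, 0 ≤ σ i)
    (hσmono : ∀ i j : Fin (min m n), i ≤ j → σ j ≤ σ i)
    (C : Matrix (Fin m) (Fin n) ℝ) (hC : C.rank ≤ r) :
    (∑ i : Fin (min m n), if r ≤ (i : ℕ) then σ i ^ 2 else 0) ≤
      ∑ a, ∑ b, ((svdDiag σ - C) a b) ^ 2 := by
  classical
  set D := svdDiag σ with hD
  let col : Matrix (Fin m) (Fin n) ℝ → Fin n → EuclideanSpace ℝ (Fin m) :=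
    fun A j => WithLp.toLp 2 (fun i => A i j)
  set W : Submodule ℝ (EuclideanSpace ℝ (Fin m)) :=
    Submodule.span ℝ (Set.range (col C)) with hWdef
  have hrankW : Module.finrank ℝ W ≤ r := by
    have h2 : Module.finrank ℝ W = C.rank := by
      rw [Matrix.rank_eq_finrank_span_cols, ← LinearEquiv.finrank_map_eq (WithLp.linearEquiv 2 ℝ (Fin m → ℝ)).symm, Submodule.map_span, ← Set.range_comp]; rfl
    omega
  let P : EuclideanSpace ℝ (Fin m) → EuclideanSpace ℝ (Fin m) :=
    fun x => ((W.orthogonalProjectionOnto x : W) : EuclideanSpace ℝ (Fin m))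
  have hPx_mem : ∀ x, P x ∈ W := fun x => (W.orthogonalProjectionOnto x).2
  have hPorth : ∀ x, x - P x ∈ Wᗮ := fun x => Submodule.sub_starProjection_mem_orthogonal (K := W) x
  have pyth : ∀ x c, c ∈ W → ‖x - c‖ ^ 2 = ‖x - P x‖ ^ 2 + ‖P x - c‖ ^ 2 := by
    intro x c hc
    have hd : x - c = (x - P x) + (P x - c) := by abel
    have ho : ⟪x - P x, P x - c⟫ = 0 := by
      rw [real_inner_comm]
      exact Submodule.inner_right_of_mem_orthogonal (sub_mem (hPx_mem x) hc) (hPorth x)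
    rw [hd, norm_add_sq_real, ho]; ring
  have hmin : ∀ x c, c ∈ W → ‖x - P x‖ ^ 2 ≤ ‖x - c‖ ^ 2 := by
    intro x c hc
    rw [pyth x c hc]
    nlinarith [sq_nonneg ‖P x - c‖]
  have hPsq : ∀ x, ‖x - P x‖ ^ 2 = ‖x‖ ^ 2 - ‖P x‖ ^ 2 := by
    intro x
    have h := pyth x 0 (zero_mem W)
    rw [sub_zero, sub_zero] at h
    linarith
  -- orthonormal basis of W
  set k := Module.finrank ℝ W with hk
  let b := stdOrthonormalBasis ℝ W
  let v : Fin k → EuclideanSpace ℝ (Fin m) := fun t => ((b t : W) : EuclideanSpace ℝ (Fin m))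
  have hv : Orthonormal ℝ v := W.subtypeₗᵢ.orthonormal_comp_iff.mpr b.orthonormal
  have hPsum : ∀ x, P x = ∑ t, ⟪v t, x⟫ • v t := by
    intro x
    show ((W.orthogonalProjectionOnto x : W) : EuclideanSpace ℝ (Fin m)) = _
    rw [b.orthogonalProjectionOnto_apply_eq_sum]
    push_cast
    simp [v]
    rfl
  have hPnormsq : ∀ x, ‖P x‖ ^ 2 = ∑ t, ⟪v t, x⟫ ^ 2 := by
    intro x
    rw [hPsum x, ← real_inner_self_eq_norm_sq,
      hv.inner_sum (fun t => ⟪v t, x⟫) (fun t => ⟪v t, x⟫) Finset.univ]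
    simp [sq]
  let e : Fin m → EuclideanSpace ℝ (Fin m) := fun a => EuclideanSpace.single a (1 : ℝ)
  let q : Fin m → ℝ := fun a => ‖P (e a)‖ ^ 2
  have hinner_single : ∀ (w : EuclideanSpace ℝ (Fin m)) a, ⟪w, e a⟫ = w a := by
    intro w a; simp [e, EuclideanSpace.inner_single_right]
  have hq_sum : ∑ a, q a = (k : ℝ) := by
    have h1 : ∀ a, q a = ∑ t, (v t a) ^ 2 := by
      intro a
      show ‖P (e a)‖ ^ 2 = _
      rw [hPnormsq]
      exact Finset.sum_congr rfl fun t _ => by rw [hinner_single]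
    rw [Finset.sum_congr rfl fun a _ => h1 a, Finset.sum_comm]
    have h2 : ∀ t, ∑ a, (v t a) ^ 2 = 1 := by
      intro t
      rw [← eucl_norm_sq (v t), hv.1 t]
      norm_num
    rw [Finset.sum_congr rfl fun t _ => h2 t]
    simp
  have hq0 : ∀ a, 0 ≤ q a := fun a => sq_nonneg _
  have hq1 : ∀ a, q a ≤ 1 := by
    intro a
    show ‖P (e a)‖ ^ 2 ≤ 1
    have h := hPsq (e a)
    have he : ‖e a‖ = 1 := by simp [e]
    rw [he] at h
    nlinarith [sq_nonneg ‖e a - P (e a)‖]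
  -- columns of D
  have hDcol : ∀ i : Fin (min m n), col D (iN i) = σ i • e (iM i) := by
    intro i
    ext a
    show D a (iN i) = (σ i • e (iM i)) a
    have hsmul : (σ i • e (iM i)) a = σ i * (if a = iM i then 1 else 0) := by
      simp [e, EuclideanSpace.single_apply]
    rw [hsmul]
    by_cases h : (a : ℕ) = (i : ℕ)
    · have ha : a = iM i := by ext; exact h
      subst ha
      rw [if_pos rfl, mul_one, hD, svdDiag_apply_iMN]
    · have ha : a ≠ iM i := fun hh => h (by rw [hh]; rfl)
      rw [if_neg ha, mul_zero, hD, svdDiag_apply_ne σ (by exact h)]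
  -- main chain
  have hcolsum : ∑ a, ∑ c, ((D - C) a c) ^ 2 = ∑ j, ‖col D j - col C j‖ ^ 2 := by
    rw [Finset.sum_comm]
    refine Finset.sum_congr rfl fun j _ => ?_
    rw [eucl_norm_sq]
    exact Finset.sum_congr rfl fun a _ => by simp [col]
  have step1 : ∑ j, ‖col D j - P (col D j)‖ ^ 2 ≤ ∑ j, ‖col D j - col C j‖ ^ 2 :=
    Finset.sum_le_sum fun j _ => hmin _ _ (Submodule.subset_span ⟨j, rfl⟩)
  have hterm : ∀ i : Fin (min m n),
      ‖col D (iN i) - P (col D (iN i))‖ ^ 2 = σ i ^ 2 * (1 - q (iM i)) := by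
    intro i
    rw [hPsq, hDcol]
    have hsm : P (σ i • e (iM i)) = σ i • P (e (iM i)) := by
      show ((W.orthogonalProjectionOnto (σ i • e (iM i)) : W) : EuclideanSpace ℝ (Fin m)) = _
      rw [map_smul]
      push_cast
      rfl
    have hnsm : ∀ (c : ℝ) (y : EuclideanSpace ℝ (Fin m)), ‖c • y‖ ^ 2 = c ^ 2 * ‖y‖ ^ 2 := by
      intro c y
      rw [norm_smul, Real.norm_eq_abs, mul_pow, sq_abs]
    have he : ‖e (iM i)‖ = 1 := by simp [e]
    rw [hsm, hnsm, hnsm, he]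
    show σ i ^ 2 * 1 ^ 2 - σ i ^ 2 * q (iM i) = σ i ^ 2 * (1 - q (iM i))
    ring
  have step2 : ∑ i : Fin (min m n), σ i ^ 2 * (1 - q (iM i)) ≤
      ∑ j, ‖col D j - P (col D j)‖ ^ 2 := by
    rw [show ∑ i : Fin (min m n), σ i ^ 2 * (1 - q (iM i)) =
        ∑ i : Fin (min m n), ‖col D (iN i) - P (col D (iN i))‖ ^ 2 from
      (Finset.sum_congr rfl fun i _ => (hterm i).symm)]
    have hmap : ∑ i : Fin (min m n), ‖col D (iN i) - P (col D (iN i))‖ ^ 2 =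
        ∑ j ∈ Finset.univ.map (Fin.castLEEmb (min_le_right m n)),
          ‖col D j - P (col D j)‖ ^ 2 := by
      rw [Finset.sum_map]; rfl
    rw [hmap]
    exact Finset.sum_le_sum_of_subset_of_nonneg (Finset.subset_univ _)
      (fun j _ _ => sq_nonneg _)
  have hqsum' : ∑ i : Fin (min m n), q (iM i) ≤ (r : ℝ) := by
    have hmap : ∑ i : Fin (min m n), q (iM i) =
        ∑ a ∈ Finset.univ.map (Fin.castLEEmb (min_le_left m n)), q a := by
      rw [Finset.sum_map]; rfl
    have h1 : ∑ a ∈ Finset.univ.map (Fin.castLEEmb (min_le_left m n)), q a ≤ ∑ a, q a :=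
      Finset.sum_le_sum_of_subset_of_nonneg (Finset.subset_univ _) (fun a _ _ => hq0 a)
    rw [hmap]
    refine h1.trans ?_
    rw [hq_sum]
    exact_mod_cast hrankW
  have happ : ∑ i : Fin (min m n), σ i ^ 2 * q (iM i) ≤
      ∑ i : Fin (min m n), if (i : ℕ) < r then σ i ^ 2 else 0 := by
    refine rearrange (fun i => σ i ^ 2) (fun i => q (iM i)) (fun i => sq_nonneg _)
      (fun i j hij => ?_) (fun i => hq0 _) (fun i => hq1 _) hqsum'
    exact pow_le_pow_left₀ (hσ0 j) (hσmono i j hij) 2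
  have htot : ∑ i : Fin (min m n), σ i ^ 2 =
      (∑ i : Fin (min m n), if (i : ℕ) < r then σ i ^ 2 else 0) +
      (∑ i : Fin (min m n), if r ≤ (i : ℕ) then σ i ^ 2 else 0) := by
    rw [← Finset.sum_add_distrib]
    refine Finset.sum_congr rfl fun i _ => ?_
    by_cases h : (i : ℕ) < r
    · rw [if_pos h, if_neg (by omega)]; ring
    · rw [if_neg h, if_pos (by omega)]; ring
  have hsplit : ∑ i : Fin (min m n), σ i ^ 2 * (1 - q (iM i)) =
      ∑ i : Fin (min m n), σ i ^ 2 - ∑ i : Fin (min m n), σ i ^ 2 * q (iM i) := by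
    rw [← Finset.sum_sub_distrib]
    exact Finset.sum_congr rfl fun i _ => by ring
  have step3 : (∑ i : Fin (min m n), if r ≤ (i : ℕ) then σ i ^ 2 else 0) ≤
      ∑ i : Fin (min m n), σ i ^ 2 * (1 - q (iM i)) := by
    rw [hsplit, htot]
    linarith
  rw [hcolsum]
  linarith


/-- Schmidt–Eckart–Young–Mirsky theorem (Frobenius norm): the rank-`r` truncated SVD is a
best approximation of `X` among matrices of rank at most `r` in the Frobenius norm, and
the truncation error is the tail sum of squared singular values. -/
theorem eckart_young_mirsky_frobenius {m n : ℕ} (X : Matrix (Fin m) (Fin n) ℝ)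
    (U : Matrix (Fin m) (Fin m) ℝ) (V : Matrix (Fin n) (Fin n) ℝ)
    (σ : Fin (min m n) → ℝ)
    (hU : Uᵀ * U = 1) (hV : Vᵀ * V = 1)
    (hσnonneg : ∀ i, 0 ≤ σ i) (hσmono : ∀ i j : Fin (min m n), i ≤ j → σ j ≤ σ i)
    (hSVD : X = U * svdDiag σ * Vᵀ)
    (r : ℕ) (hr : r ≤ min m n) :
    (∀ B : Matrix (Fin m) (Fin n) ℝ, B.rank ≤ r →
        frobNorm (X - truncSVD U V σ r) ≤ frobNorm (X - B)) ∧
      frobNorm (X - truncSVD U V σ r) ^ 2 =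
        ∑ i : Fin (min m n), if r ≤ (i : ℕ) then σ i ^ 2 else 0 := by
  have hUU : U * Uᵀ = 1 := mul_eq_one_comm.mp hU
  have hVV : V * Vᵀ = 1 := mul_eq_one_comm.mp hV
  have hXr : X - truncSVD U V σ r =
      U * svdDiag (fun i => if r ≤ (i : ℕ) then σ i else 0) * Vᵀ := by
    have hfun : (fun i : Fin (min m n) => σ i - if (i : ℕ) < r then σ i else 0) =
        fun i : Fin (min m n) => if r ≤ (i : ℕ) then σ i else 0 := by
      funext i
      by_cases h : (i : ℕ) < r
      · rw [if_pos h, if_neg (by omega)]; ring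
      · rw [if_neg h, if_pos (by omega)]; ring
    rw [hSVD, truncSVD_eq, ← Matrix.sub_mul, ← Matrix.mul_sub, svdDiag_sub, hfun]
  have hS1 : ∑ a, ∑ c, ((X - truncSVD U V σ r) a c) ^ 2 =
      ∑ i : Fin (min m n), if r ≤ (i : ℕ) then σ i ^ 2 else 0 := by
    rw [hXr, frobSq_conj U V hU hV, svdDiag_frobSq]
    refine Finset.sum_congr rfl fun i _ => ?_
    by_cases h : r ≤ (i : ℕ)
    · rw [if_pos h, if_pos h]
    · rw [if_neg h, if_neg h]; ring
  constructor
  · intro B hB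
    set C := Uᵀ * B * V with hCdef
    have hrankC : C.rank ≤ r :=
      le_trans (le_trans (Matrix.rank_mul_le_left _ _) (Matrix.rank_mul_le_right _ _)) hB
    have hXB : X - B = U * (svdDiag σ - C) * Vᵀ := by
      rw [Matrix.mul_sub, Matrix.sub_mul, ← hSVD, hCdef]
      congr 1
      symm
      calc U * (Uᵀ * B * V) * Vᵀ = (U * Uᵀ) * B * (V * Vᵀ) := by
            simp only [Matrix.mul_assoc]
        _ = B := by rw [hUU, hVV, Matrix.one_mul, Matrix.mul_one]
    have h2 : (∑ i : Fin (min m n), if r ≤ (i : ℕ) then σ i ^ 2 else 0) ≤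
        ∑ a, ∑ c, ((X - B) a c) ^ 2 := by
      rw [hXB, frobSq_conj U V hU hV]
      exact core σ hσnonneg hσmono C hrankC
    rw [frobNorm, frobNorm]
    apply Real.sqrt_le_sqrt
    linarith
  · rw [frobNorm, Real.sq_sqrt (by positivity), hS1]
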